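/- arXiv:2208.03173 — 2 statements merged into one kernel-verified Lean document; each statement's English description precedes it below -/
import Mathlib

section
/- Let C be a triangulated category and N ⊆ C a thick subcategory with Verdier quotient C/N. (i) There is at most one pair (P_N, P_{C/N}) of slicings of N and of C/N compatible with a given slicing P of C; when it exists, P_N(φ) = P(φ) ∩ N and P_{C/N}(φ) is the isomorphism closure of P(φ) in C/N, for every φ ∈ ℝ. (ii) Conversely, there is at most one slicing P of C compatible with a given pair (P_N, P_{C/N}); when it exists, an object c lies in P(φ) if and only if c ∈ P_{C/N}(φ) and Hom_C(b, c) = 0 = Hom_C(c, d) for all b ∈ P_N(ψ) with ψ > φ and all d ∈ P_N(ψ') with ψ' < φ. -/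
open CategoryTheory CategoryTheory.Limits CategoryTheory.Pretriangulated
open scoped ENNReal

namespace PaperStab

attribute [local instance] Classical.propDecidable

universe w w₂ u v u₂ v₂

variable (C : Type u) [Category.{v} C] [Preadditive C] [HasZeroObject C]
  [HasShift C ℤ] [∀ n : ℤ, (shiftFunctor C n).Additive] [Pretriangulated C]

/-- A Harder–Narasimhan filtration of `X` with factors in the slices `P`. -/
structure HNFiltration (P : ℝ → Set C) (X : C) where
  n : ℕ
  obj : Fin (n + 1) → C
  isZero_zero : IsZero (obj 0)
  last_eq : obj (Fin.last n) = X
  map : ∀ i : Fin n, obj i.castSucc ⟶ obj i.succ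
  factor : Fin n → C
  phase : Fin n → ℝ
  phase_anti : ∀ i j : Fin n, i < j → phase j < phase i
  factor_nonzero : ∀ i, ¬ IsZero (factor i)
  factor_mem : ∀ i, factor i ∈ P (phase i)
  toFactor : ∀ i : Fin n, obj i.succ ⟶ factor i
  toShift : ∀ i : Fin n, factor i ⟶ (obj i.castSucc)⟦(1 : ℤ)⟧
  distinguished : ∀ i : Fin n,
    Triangle.mk (map i) (toFactor i) (toShift i) ∈ distTriang C

/-- A slicing of the full (triangulated) subcategory of `C` on the objects `N`.
A slicing of `C` itself is the case `N = Set.univ`. -/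
structure Slicing (N : Set C) where
  P : ℝ → Set C
  subset : ∀ φ : ℝ, P φ ⊆ N
  isoClosed : ∀ (φ : ℝ) ⦃X Y : C⦄, (X ≅ Y) → Y ∈ N → X ∈ P φ → Y ∈ P φ
  zero_mem : ∀ (φ : ℝ) ⦃X : C⦄, IsZero X → X ∈ N → X ∈ P φ
  shift_mem : ∀ (φ : ℝ) (X : C), X ∈ P (φ + 1) ↔ X⟦(-1 : ℤ)⟧ ∈ P φ
  hom_orth : ∀ ⦃φ ψ : ℝ⦄, ψ < φ → ∀ ⦃X Y : C⦄, X ∈ P φ → Y ∈ P ψ → ∀ f : X ⟶ Y, f = 0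
  hn : ∀ X ∈ N, ¬ IsZero X → Nonempty (HNFiltration C P X)

/-- Thick subcategory: strictly full triangulated subcategory closed under direct summands. -/
structure IsThick (N : Set C) : Prop where
  isoClosed : ∀ ⦃X Y : C⦄, (X ≅ Y) → X ∈ N → Y ∈ N
  zero_mem : ∀ ⦃X : C⦄, IsZero X → X ∈ N
  shift_mem : ∀ (X : C) (k : ℤ), X ∈ N → X⟦k⟧ ∈ N
  ext_mem : ∀ T ∈ distTriang C, T.obj₁ ∈ N → T.obj₃ ∈ N → T.obj₂ ∈ N
  summand_mem : ∀ ⦃X Z : C⦄ (i : X ⟶ Z) (r : Z ⟶ X), i ≫ r = 𝟙 X → Z ∈ N → X ∈ N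

/-- The set `M` is (the object set of) a strictly full triangulated subcategory. -/
def IsTriangulatedClosed (M : Set C) : Prop :=
  (∀ ⦃X Y : C⦄, (X ≅ Y) → X ∈ M → Y ∈ M) ∧ (∀ ⦃X : C⦄, IsZero X → X ∈ M) ∧
  (∀ (X : C) (k : ℤ), X ∈ M → X⟦k⟧ ∈ M) ∧
  (∀ T ∈ distTriang C, T.obj₁ ∈ M → T.obj₃ ∈ M → T.obj₂ ∈ M)

/-- Triangulated closure: smallest strictly full triangulated subcategory containing `S0`. -/
def triangClosure (S0 : Set C) : Set C :=
  ⋂₀ {M : Set C | S0 ⊆ M ∧ IsTriangulatedClosed C M}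

/-- No infinite chains of proper strict subobjects or proper strict quotients within `H`
(with respect to the strict exact structure induced by the triangles of `C`);
this expresses that `H` is a length (quasi-abelian) category. -/
def NoInfiniteChains (H : Set C) : Prop :=
  (¬ ∃ (X : ℕ → C) (f : ∀ k : ℕ, X (k + 1) ⟶ X k), ∀ k : ℕ,
      X (k + 1) ∈ H ∧ X k ∈ H ∧ ∃ (Q : C) (g : X k ⟶ Q) (h : Q ⟶ (X (k + 1))⟦(1 : ℤ)⟧),
        Triangle.mk (f k) g h ∈ (distTriang C) ∧ Q ∈ H ∧ ¬ IsZero Q) ∧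
  (¬ ∃ (X : ℕ → C) (f : ∀ k : ℕ, X k ⟶ X (k + 1)), ∀ k : ℕ,
      X k ∈ H ∧ X (k + 1) ∈ H ∧ ∃ (A : C) (e : A ⟶ X k) (h : X (k + 1) ⟶ A⟦(1 : ℤ)⟧),
        Triangle.mk e (f k) h ∈ (distTriang C) ∧ A ∈ H ∧ ¬ IsZero A)

/-- `X` is a simple object of the (quasi-)abelian subcategory on `H`. -/
def IsSimpleIn (H : Set C) (X : C) : Prop :=
  X ∈ H ∧ ¬ IsZero X ∧ ∀ (A Q : C) (f : A ⟶ X) (g : X ⟶ Q) (h : Q ⟶ A⟦(1 : ℤ)⟧),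
    Triangle.mk f g h ∈ (distTriang C) → A ∈ H → Q ∈ H → IsZero A ∨ IsZero Q

/-- An algebraic heart: a length category with finitely many simple objects up to isomorphism. -/
def AlgebraicHeart (H : Set C) : Prop :=
  NoInfiniteChains C H ∧ ∃ S : Set C, S.Finite ∧
    (∀ X ∈ S, IsSimpleIn C H X) ∧ ∀ X : C, IsSimpleIn C H X → ∃ Y ∈ S, Nonempty (X ≅ Y)

/-- A torsion pair `(T, Fr)` on the heart `H`. -/
def TorsionPair (H T Fr : Set C) : Prop :=
  T ⊆ H ∧ Fr ⊆ H ∧ (∀ X ∈ T, ∀ Y ∈ Fr, ∀ f : X ⟶ Y, f = 0) ∧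
  ∀ X ∈ H, ∃ (A B : C) (f : A ⟶ X) (g : X ⟶ B) (h : B ⟶ A⟦(1 : ℤ)⟧),
    Triangle.mk f g h ∈ (distTriang C) ∧ A ∈ T ∧ B ∈ Fr

/-- The class of morphisms with cone in `N`; inverting it gives the Verdier quotient `C/N`. -/
def VerdierW (N : Set C) : MorphismProperty C := fun X Y f =>
  ∃ (Z : C) (g : Y ⟶ Z) (h : Z ⟶ X⟦(1 : ℤ)⟧), Triangle.mk f g h ∈ (distTriang C) ∧ Z ∈ N

variable {C}

noncomputable def Slicing.maxPhase {N : Set C} (S : Slicing C N) (X : C) : ℝ :=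
  if h : X ∈ N ∧ ¬ IsZero X then ⨆ i, (S.hn X h.1 h.2).some.phase i else 0

noncomputable def Slicing.minPhase {N : Set C} (S : Slicing C N) (X : C) : ℝ :=
  if h : X ∈ N ∧ ¬ IsZero X then ⨅ i, (S.hn X h.1 h.2).some.phase i else 0

/-- The metric on slicings, `d(S, T) = sup max (|φ⁺_S - φ⁺_T|) (|φ⁻_S - φ⁻_T|)`,
with values in `[0, ∞]`. -/
noncomputable def slicingDist {N : Set C} (S T : Slicing C N) : ℝ≥0∞ :=
  ⨆ X : C, ENNReal.ofReal
    (max |S.maxPhase X - T.maxPhase X| |S.minPhase X - T.minPhase X|)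

/-- `P(I)`: objects whose HN factors have phases in the interval `I`. -/
def Slicing.interval {N : Set C} (S : Slicing C N) (I : Set ℝ) : Set C :=
  {X | X ∈ N ∧ (IsZero X ∨ ∃ F : HNFiltration C S.P X, ∀ i, F.phase i ∈ I)}

/-- `P(I)` is a length quasi-abelian category. -/
def Slicing.LengthOn {N : Set C} (S : Slicing C N) (I : Set ℝ) : Prop :=
  NoInfiniteChains C (S.interval I)

def Slicing.LocallyFinite {N : Set C} (S : Slicing C N) : Prop :=
  ∃ ε > (0 : ℝ), ∀ φ : ℝ, S.LengthOn (Set.Ioo (φ - ε) (φ + ε))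

/-- The slicing `S` restricts to the subcategory `N`: HN factors of objects of `N` lie in `N`. -/
def Slicing.RestrictsTo {N0 : Set C} (S : Slicing C N0) (N : Set C) : Prop :=
  ∀ X ∈ N, ¬ IsZero X → ∃ F : HNFiltration C S.P X, ∀ i, F.factor i ∈ N

/-- `P(I) ∩ N` is a Serre subcategory of `P(I)`. -/
def Slicing.SerreOn {N0 : Set C} (S : Slicing C N0) (N : Set C) (I : Set ℝ) : Prop :=
  ∀ T ∈ distTriang C, T.obj₁ ∈ S.interval I → T.obj₂ ∈ S.interval I →
    T.obj₃ ∈ S.interval I → (T.obj₂ ∈ N ↔ T.obj₁ ∈ N ∧ T.obj₃ ∈ N)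

/-- The slicing `S` is adapted to the thick subcategory `N`. -/
def Slicing.IsAdapted {N0 : Set C} (S : Slicing C N0) (N : Set C) : Prop :=
  S.RestrictsTo N ∧
    ∀ φ : ℝ, S.SerreOn N (Set.Ioc φ (φ + 1)) ∧ S.SerreOn N (Set.Ico φ (φ + 1))

variable (C)
variable (E : Type w) [NormedAddCommGroup E] [InnerProductSpace ℝ E] [FiniteDimensional ℝ E]

/-- The data of the map `v : K(C) → Λ`, realised on `Λ ⊗ ℝ = E`. -/
structure ChargeData where
  v : C → E
  additive : ∀ T ∈ distTriang C, v T.obj₂ = v T.obj₁ + v T.obj₃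

/-- A lax pre-stability condition on the (full triangulated) subcategory `N ⊆ C`,
with locally finite slicing, and charge a linear map `E → ℂ`. -/
structure LaxPreStab (N : Set C) (vd : ChargeData C E) where
  slicing : Slicing C N
  locallyFinite : slicing.LocallyFinite
  Z : E →L[ℝ] ℂ
  compat : ∀ (φ : ℝ) (X : C), X ∈ slicing.P φ → ∃ m : ℝ, 0 ≤ m ∧
    Z (vd.v X) = (m : ℂ) * Complex.exp (↑(Real.pi * φ) * Complex.I)

variable {C E}

/-- The mass of an object: sum of the masses of its HN factors. -/
noncomputable def LaxPreStab.mass {N : Set C} {vd : ChargeData C E}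
    (σ : LaxPreStab C E N vd) (X : C) : ℝ :=
  if h : X ∈ N ∧ ¬ IsZero X then
    ∑ i, ‖σ.Z (vd.v ((σ.slicing.hn X h.1 h.2).some.factor i))‖
  else 0

/-- The massless subcategory of a lax pre-stability condition. -/
def LaxPreStab.massless {N : Set C} {vd : ChargeData C E}
    (σ : LaxPreStab C E N vd) : Set C :=
  {X | X ∈ N ∧ σ.mass X = 0}


/-- The set of phases of the massive HN factors of an object. -/
noncomputable def LaxPreStab.massivePhases {N : Set C} {vd : ChargeData C E}
    (σ : LaxPreStab C E N vd) (X : C) : Set ℝ :=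
  if h : X ∈ N ∧ ¬ IsZero X then
    {φ | ∃ i, (σ.slicing.hn X h.1 h.2).some.phase i = φ ∧
      σ.Z (vd.v ((σ.slicing.hn X h.1 h.2).some.factor i)) ≠ 0}
  else ∅

/-- A stable object of phase `φ`: a simple object of the slice `P(φ)`. -/
def Slicing.IsStableIn {N : Set C} (S : Slicing C N) (φ : ℝ) (X : C) : Prop :=
  ¬ IsZero X ∧ X ∈ S.P φ ∧
    ∀ (A Q : C) (f : A ⟶ X) (g : X ⟶ Q) (h : Q ⟶ A⟦(1 : ℤ)⟧),
      Triangle.mk f g h ∈ (distTriang C) → A ∈ S.P φ → Q ∈ S.P φ → IsZero A ∨ IsZero Q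

def Slicing.IsStable {N : Set C} (S : Slicing C N) (X : C) : Prop :=
  ∃ φ : ℝ, S.IsStableIn φ X

def LaxPreStab.MassiveStable {N : Set C} {vd : ChargeData C E}
    (σ : LaxPreStab C E N vd) (X : C) : Prop :=
  σ.slicing.IsStable X ∧ σ.Z (vd.v X) ≠ 0

/-- The support property: `|Z(v(s))| ≥ ‖v(s)‖ / K` for all massive stable `s`. -/
def LaxPreStab.HasSupport {N : Set C} {vd : ChargeData C E}
    (σ : LaxPreStab C E N vd) : Prop :=
  ∃ K > (0 : ℝ), ∀ X : C, σ.MassiveStable X → ‖vd.v X‖ / K ≤ ‖σ.Z (vd.v X)‖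

/-- A classical (pre-)stability condition: every non-zero object is massive. -/
def LaxPreStab.IsClassical {N : Set C} {vd : ChargeData C E}
    (σ : LaxPreStab C E N vd) : Prop :=
  ∀ X ∈ N, σ.mass X = 0 → IsZero X

/-- The semi-norm `‖W‖_σ` associated to a lax pre-stability condition, valued in `[0,∞]`. -/
noncomputable def LaxPreStab.seminorm {N : Set C} {vd : ChargeData C E}
    (σ : LaxPreStab C E N vd) (W : E →L[ℝ] ℂ) : ℝ≥0∞ :=
  ⨆ (X : C) (_ : σ.MassiveStable X), ENNReal.ofReal (‖W (vd.v X)‖ / ‖σ.Z (vd.v X)‖)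

/-- The (extended pseudo-)metric `max (d(P,Q)) (‖W - Z‖)` on the space of
lax pre-stability conditions; this induces the topology of
`Slice(C) × Hom(Λ, ℂ)`. -/
noncomputable instance {N : Set C} {vd : ChargeData C E} :
    PseudoEMetricSpace (LaxPreStab C E N vd) where
  edist σ τ := max (slicingDist σ.slicing τ.slicing) (ENNReal.ofReal ‖σ.Z - τ.Z‖)
  edist_self σ := by
    have h1 : slicingDist σ.slicing σ.slicing = 0 := by
      unfold slicingDist
      refine le_antisymm (iSup_le fun X => by simp) zero_le
    have h2 : ENNReal.ofReal ‖σ.Z - σ.Z‖ = 0 := by simp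
    simp [h1, h2]
  edist_comm σ τ := by
    show max (slicingDist σ.slicing τ.slicing) (ENNReal.ofReal ‖σ.Z - τ.Z‖) =
      max (slicingDist τ.slicing σ.slicing) (ENNReal.ofReal ‖τ.Z - σ.Z‖)
    have h1 : slicingDist σ.slicing τ.slicing = slicingDist τ.slicing σ.slicing := by
      unfold slicingDist
      refine iSup_congr fun X => ?_
      rw [abs_sub_comm (Slicing.maxPhase σ.slicing X) (Slicing.maxPhase τ.slicing X),
        abs_sub_comm (Slicing.minPhase σ.slicing X) (Slicing.minPhase τ.slicing X)]
    rw [h1, norm_sub_rev]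
  edist_triangle σ τ ρ := by
    show max (slicingDist σ.slicing ρ.slicing) (ENNReal.ofReal ‖σ.Z - ρ.Z‖) ≤
      max (slicingDist σ.slicing τ.slicing) (ENNReal.ofReal ‖σ.Z - τ.Z‖) +
      max (slicingDist τ.slicing ρ.slicing) (ENNReal.ofReal ‖τ.Z - ρ.Z‖)
    apply max_le
    · have h1 : slicingDist σ.slicing ρ.slicing ≤
          slicingDist σ.slicing τ.slicing + slicingDist τ.slicing ρ.slicing := by
        unfold slicingDist
        refine iSup_le fun X => ?_
        have hre : max |Slicing.maxPhase σ.slicing X - Slicing.maxPhase ρ.slicing X|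
              |Slicing.minPhase σ.slicing X - Slicing.minPhase ρ.slicing X| ≤
            (max |Slicing.maxPhase σ.slicing X - Slicing.maxPhase τ.slicing X|
              |Slicing.minPhase σ.slicing X - Slicing.minPhase τ.slicing X|) +
            (max |Slicing.maxPhase τ.slicing X - Slicing.maxPhase ρ.slicing X|
              |Slicing.minPhase τ.slicing X - Slicing.minPhase ρ.slicing X|) := by
          apply max_le
          · exact (abs_sub_le _ _ _).trans (add_le_add (le_max_left _ _) (le_max_left _ _))
          · exact (abs_sub_le _ _ _).trans (add_le_add (le_max_right _ _) (le_max_right _ _))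
        refine le_trans (ENNReal.ofReal_le_ofReal hre) ?_
        refine le_trans ENNReal.ofReal_add_le ?_
        refine add_le_add ?_ ?_
        · exact le_iSup (fun Y : C => ENNReal.ofReal
            (max |Slicing.maxPhase σ.slicing Y - Slicing.maxPhase τ.slicing Y|
              |Slicing.minPhase σ.slicing Y - Slicing.minPhase τ.slicing Y|)) X
        · exact le_iSup (fun Y : C => ENNReal.ofReal
            (max |Slicing.maxPhase τ.slicing Y - Slicing.maxPhase ρ.slicing Y|
              |Slicing.minPhase τ.slicing Y - Slicing.minPhase ρ.slicing Y|)) X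
      exact h1.trans (add_le_add (le_max_left _ _) (le_max_left _ _))
    · have h2 : ENNReal.ofReal ‖σ.Z - ρ.Z‖ ≤
          ENNReal.ofReal ‖σ.Z - τ.Z‖ + ENNReal.ofReal ‖τ.Z - ρ.Z‖ := by
        refine le_trans (ENNReal.ofReal_le_ofReal ?_) ENNReal.ofReal_add_le
        have := dist_triangle σ.Z τ.Z ρ.Z
        simpa [dist_eq_norm] using this
      exact h2.trans (add_le_add (le_max_right _ _) (le_max_right _ _))

/-- The set of classical stability conditions on the subcategory `N` (charge factoring
through `v`), as a subset of the space of lax pre-stability conditions. -/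
def StabSet (N : Set C) (vd : ChargeData C E) : Set (LaxPreStab C E N vd) :=
  {σ | σ.IsClassical ∧ σ.HasSupport}

/-- The space of lax stability conditions: lax pre-stability conditions satisfying the
support property and lying in the closure of the space of classical stability conditions. -/
def StabL (N : Set C) (vd : ChargeData C E) : Set (LaxPreStab C E N vd) :=
  {σ | σ.HasSupport ∧ σ ∈ closure (StabSet N vd)}

/-- Lax stability conditions with massless subcategory exactly `M`. -/
def StabLN (N : Set C) (vd : ChargeData C E) (M : Set C) : Set (LaxPreStab C E N vd) :=
  {σ | σ ∈ StabL N vd ∧ σ.massless = M}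

/-- `τ ∈ B_ε(σ)`. -/
def memB {N : Set C} {vd : ChargeData C E} (σ τ : LaxPreStab C E N vd) (ε : ℝ) : Prop :=
  slicingDist σ.slicing τ.slicing < ENNReal.ofReal ε ∧
  σ.seminorm (τ.Z - σ.Z) < ENNReal.ofReal (Real.sin (Real.pi * ε))

/-- `Λ_N ⊗ ℝ`: the (real span of the) saturation of the image of `K(N)` in `Λ`. -/
def chargeSpan (vd : ChargeData C E) (N : Set C) : Submodule ℝ E :=
  Submodule.span ℝ (vd.v '' N)

/-- `W ↦ W_N`: restriction of a charge to `Λ_N`, viewed in `Hom(Λ, ℂ)` via the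
orthogonal splitting. -/
noncomputable def restrictCharge (K : Submodule ℝ E) (W : E →L[ℝ] ℂ) : E →L[ℝ] ℂ :=
  W.comp (K.subtypeL.comp K.orthogonalProjectionOnto)

variable (C) in
/-- The charge data `v_N : K(N) → Λ_N` for a thick subcategory `N`. -/
noncomputable def chargeDataOn (vd : ChargeData C E) (N : Set C) :
    ChargeData C ↥(chargeSpan vd N) where
  v X := (chargeSpan vd N).orthogonalProjectionOnto (vd.v X)
  additive T hT := by simp only [vd.additive T hT, map_add]

/-- The image in the quotient of the slices of a slicing:
`P_{C/N}(φ)` is the isomorphism closure of `P(φ)` in `C/N`. -/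
def QuotSlices {D : Type u₂} [Category.{v₂} D] (F : C ⥤ D) (P : ℝ → Set C) (φ : ℝ) :
    Set D :=
  {d | ∃ c ∈ P φ, Nonempty (d ≅ F.obj c)}

/-- Essential image of `N` under the quotient functor, i.e. `N/M ⊆ C/M`. -/
def quotImage {D : Type u₂} [Category.{v₂} D] (F : C ⥤ D) (N : Set C) : Set D :=
  {d | ∃ c ∈ N, Nonempty (d ≅ F.obj c)}

/-- Compatibility of a slicing of `C` with a pair of slicings of `N` and of `C/N`. -/
def Compatible {D : Type u₂} [Category.{v₂} D] [Preadditive D] [HasZeroObject D]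
    [HasShift D ℤ] [∀ n : ℤ, (shiftFunctor D n).Additive] [Pretriangulated D]
    (F : C ⥤ D) {N : Set C}
    (S : Slicing C Set.univ) (SN : Slicing C N) (SQ : Slicing D Set.univ) : Prop :=
  (∀ φ : ℝ, SN.P φ ⊆ S.P φ) ∧ ∀ (φ : ℝ) (X : C), X ∈ S.P φ → F.obj X ∈ SQ.P φ

/-- A slicing is well-adapted to `N` if it is adapted to it and the quotient
slicing on `C/N` is locally finite. -/
def WellAdapted {D : Type u₂} [Category.{v₂} D] [Preadditive D] [HasZeroObject D]
    [HasShift D ℤ] [∀ n : ℤ, (shiftFunctor D n).Additive] [Pretriangulated D]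
    (F : C ⥤ D) (S : Slicing C Set.univ) (N : Set C) : Prop :=
  S.IsAdapted N ∧ ∃ SQ : Slicing D Set.univ,
    (∀ φ : ℝ, SQ.P φ = QuotSlices F S.P φ) ∧ SQ.LocallyFinite

/-- Support propagates from `σ` (with massless subcategory `N`) with constant `ε`. -/
def SupportPropagatesAt (vd : ChargeData C E) (N : Set C)
    (σ : LaxPreStab C E Set.univ vd) (ε : ℝ) : Prop :=
  ∀ τ : LaxPreStab C E Set.univ vd, memB σ τ ε →
    σ.seminorm (σ.Z - (τ.Z - restrictCharge (chargeSpan vd N) τ.Z)) <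
      ENNReal.ofReal (Real.sin (Real.pi * ε)) →
    (∃ τN : LaxPreStab C ↥(chargeSpan vd N) N (chargeDataOn C vd N),
        (∀ φ : ℝ, τN.slicing.P φ = τ.slicing.P φ ∩ N) ∧
        (∀ x : ↥(chargeSpan vd N), τN.Z x = τ.Z ↑x) ∧
        τN ∈ StabL N (chargeDataOn C vd N)) →
    τ ∈ StabL Set.univ vd

/-- Support propagates from `Stab_{l,N}(C)`: uniformly on each connected component. -/
def SupportPropagatesFrom (vd : ChargeData C E) (N : Set C) : Prop :=
  ∀ σ ∈ StabLN Set.univ vd N, ∃ ε > (0 : ℝ),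
    ∀ σ' ∈ connectedComponentIn (StabLN Set.univ vd N) σ, SupportPropagatesAt vd N σ' ε

/-- `f` is a homeomorphism onto its image, which is a union of connected components. -/
def IsHomeoOntoComponents {α : Type*} {β : Type*} [TopologicalSpace α]
    [TopologicalSpace β] (f : α → β) : Prop :=
  Continuous f ∧ Function.Injective f ∧
  (∀ U : Set α, IsOpen U → ∃ V : Set β, IsOpen V ∧ f '' U = V ∩ Set.range f) ∧
  (∀ x ∈ Set.range f, connectedComponent x ⊆ Set.range f)

/-- The equivalence relation on lax stability conditions defining the space of
quotient stability conditions: same charge and same connected component of the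
fibre of the charge map. -/
def qRel (vd : ChargeData C E) :
    ↥(StabL (C := C) Set.univ vd) → ↥(StabL (C := C) Set.univ vd) → Prop :=
  fun σ τ => σ.1.Z = τ.1.Z ∧
    τ ∈ connectedComponentIn {ρ : ↥(StabL (C := C) Set.univ vd) | ρ.1.Z = σ.1.Z} σ

/-- The space of quotient stability conditions, with the quotient topology. -/
def QStab (vd : ChargeData C E) : Type _ := Quot (qRel vd)

noncomputable instance (vd : ChargeData C E) : TopologicalSpace (QStab vd) :=
  inferInstanceAs (TopologicalSpace (Quot _))

/-- The stratum of quotient stability conditions with massless subcategory `N`. -/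
def QStabN (vd : ChargeData C E) (N : Set C) : Set (QStab vd) :=
  {q | ∃ σ : ↥(StabL (C := C) Set.univ vd), σ.1 ∈ StabLN Set.univ vd N ∧ Quot.mk _ σ = q}

/-- The charge map on the space of quotient stability conditions. -/
def qCharge (vd : ChargeData C E) : QStab vd → (E →L[ℝ] ℂ) :=
  Quot.lift (fun σ => σ.1.Z) (fun _ _ h => h.1)

/-!
A filtration of an object `X ∈ P(φ)` by distinguished triangles whose factors are semistable of
strictly decreasing phases is concentrated in its factor of phase `φ`. Applied to the
`P_N`-filtration of an object of `P(φ) ∩ N`, and to the image in `C/N` of the `P`-filtration of a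
lift of an object of `P_{C/N}(φ)`, this identifies `P_N` and `P_{C/N}` as in (i).

For (ii), let `X` satisfy the orthogonality conditions and lie in `P_{C/N}(φ)`. If the first
`P`-factor `A` of `X` had phase `> φ`, it would vanish in `C/N`. A morphism killed by the Verdier
localization factors through `N` (calculus of left fractions for the multiplicative closure of the
morphisms with cone in `N`), and splitting the intermediate object of `N` along its
`P_N`-filtration shows that every map `A ⟶ X` vanishes, hence `A = 0`. Dually for the last factor,
so all phases of the HN filtration of `X` equal `φ`.
-/

lemma Slicing.mem_of_iso (S : Slicing C Set.univ) {φ : ℝ} {A B : C} (e : A ≅ B)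
    (h : A ∈ S.P φ) : B ∈ S.P φ :=
  S.isoClosed φ e (Set.mem_univ B) h

lemma Slicing.shift_neg_one_mem {N : Set C} (S : Slicing C N) {φ : ℝ} {A : C}
    (h : A ∈ S.P φ) : A⟦(-1 : ℤ)⟧ ∈ S.P (φ - 1) :=
  (S.shift_mem (φ - 1) A).mp (by rwa [sub_add_cancel])

omit [HasZeroObject C] [Pretriangulated C] in
lemma eq_zero_of_shift_one {U V : C} (g : U⟦(1 : ℤ)⟧ ⟶ V)
    (h : ∀ f : U ⟶ V⟦(-1 : ℤ)⟧, f = 0) : g = 0 := by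
  apply (shiftFunctor C (-1 : ℤ)).map_injective
  let e := shiftFunctorCompIsoId C (1 : ℤ) (-1 : ℤ) (add_neg_cancel 1)
  rw [Functor.map_zero, ← cancel_epi (e.inv.app U), h (e.inv.app U ≫ _), comp_zero]

/-- A filtration `0 = X₀ → ⋯ → Xₙ = X` with triangles `Xᵢ → Xᵢ₊₁ → Aᵢ → Xᵢ[1]`.
Unlike `HNFiltration`, the factors `Aᵢ` may vanish and need not lie in any slice, so that these
filtrations can be pushed along triangulated functors. -/
structure PhaseFiltration (X : C) where
  n : ℕ
  obj : Fin (n + 1) → C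
  isZero_zero : IsZero (obj 0)
  last_eq : obj (Fin.last n) = X
  map : ∀ i : Fin n, obj i.castSucc ⟶ obj i.succ
  factor : Fin n → C
  phase : Fin n → ℝ
  phase_anti : ∀ i j : Fin n, i < j → phase j < phase i
  toFactor : ∀ i : Fin n, obj i.succ ⟶ factor i
  toShift : ∀ i : Fin n, factor i ⟶ (obj i.castSucc)⟦(1 : ℤ)⟧
  distinguished : ∀ i : Fin n,
    Triangle.mk (map i) (toFactor i) (toShift i) ∈ distTriang C

def HNFiltration.toPhaseFiltration {P : ℝ → Set C} {X : C} (W : HNFiltration C P X) :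
    PhaseFiltration X :=
  { W with }

namespace PhaseFiltration

def mapTriangulated {X : C} (W : PhaseFiltration X) {D : Type u₂} [Category.{v₂} D]
    [Preadditive D] [HasZeroObject D] [HasShift D ℤ] [∀ n : ℤ, (shiftFunctor D n).Additive]
    [Pretriangulated D] (G : C ⥤ D) [G.CommShift ℤ] [G.IsTriangulated] :
    PhaseFiltration (G.obj X) where
  n := W.n
  obj j := G.obj (W.obj j)
  isZero_zero := G.map_isZero W.isZero_zero
  last_eq := congrArg G.obj W.last_eq
  map i := G.map (W.map i)
  factor i := G.obj (W.factor i)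
  phase := W.phase
  phase_anti := W.phase_anti
  toFactor i := G.map (W.toFactor i)
  toShift i := G.map (W.toShift i) ≫ (G.commShiftIso (1 : ℤ)).hom.app (W.obj i.castSucc)
  distinguished i := G.map_distinguished _ (W.distinguished i)

variable {X : C} (W : PhaseFiltration X)

lemma strictAnti_phase : StrictAnti W.phase := fun i j h => W.phase_anti i j h

def lastIso : W.obj (Fin.last W.n) ≅ X := eqToIso W.last_eq

lemma isIso_toFactor {i : Fin W.n} (hi : IsZero (W.obj i.castSucc)) : IsIso (W.toFactor i) :=
  (Triangle.isZero₁_iff_isIso₂ _ (W.distinguished i)).mp hi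

lemma isIso_map {i : Fin W.n} (hi : IsZero (W.factor i)) : IsIso (W.map i) :=
  (Triangle.isZero₃_iff_isIso₁ _ (W.distinguished i)).mp hi

lemma hom_obj_eq_zero {Y : C} {j : Fin (W.n + 1)}
    (h : ∀ i : Fin W.n, i.succ ≤ j → ∀ v : W.factor i ⟶ Y, v = 0) (f : W.obj j ⟶ Y) :
    f = 0 := by
  induction j using Fin.induction with
  | zero => exact W.isZero_zero.eq_of_src f 0
  | succ i ih =>
    have hmap : W.map i ≫ f = 0 :=
      ih (fun i' hi' => h i' (hi'.trans Fin.castSucc_lt_succ.le)) _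
    obtain ⟨v, rfl⟩ := Triangle.yoneda_exact₂ _ (W.distinguished i) f hmap
    rw [h i le_rfl v]
    exact comp_zero

/-- `b` lifts to the stage built from the factors of phase `≥ t`, which maps trivially to `Y`. -/
lemma comp_eq_zero_of_phase_split {X' Y : C} (t : ℝ)
    (hhigh : ∀ i, t ≤ W.phase i → ∀ v : W.factor i ⟶ Y, v = 0)
    (hlow : ∀ i, W.phase i < t → ∀ u : X' ⟶ W.factor i, u = 0)
    (b : X' ⟶ X) (w : X ⟶ Y) : b ≫ w = 0 := by
  suffices ∀ (j : Fin (W.n + 1)) (b : X' ⟶ W.obj j) (w : W.obj j ⟶ Y), b ≫ w = 0 by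
    simpa using this _ (b ≫ W.lastIso.inv) (W.lastIso.hom ≫ w)
  intro j
  induction j using Fin.induction with
  | zero => exact fun b _ => by rw [W.isZero_zero.eq_of_tgt b 0, zero_comp]
  | succ j ih =>
    intro b w
    by_cases hj : W.phase j < t
    · obtain ⟨b', rfl⟩ := Triangle.coyoneda_exact₂ _ (W.distinguished j) b (hlow j hj _)
      exact (Category.assoc _ _ _).trans (ih _ _)
    · rw [W.hom_obj_eq_zero (fun i hi => hhigh i ?_) w, comp_zero]
      exact (not_lt.mp hj).trans (W.strictAnti_phase.antitone (Fin.succ_le_succ_iff.mp hi))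

lemma exists_cut (t : ℝ) : ∃ k : Fin (W.n + 1),
    (∀ i, i.succ ≤ k → t < W.phase i) ∧ ∀ i, k ≤ i.castSucc → W.phase i ≤ t := by
  by_cases hall : ∀ i, t < W.phase i
  · exact ⟨Fin.last _, fun i _ => hall i,
      fun i hi => absurd hi (not_le.mpr (Fin.castSucc_lt_last i))⟩
  push Not at hall
  obtain ⟨k, hk, hmin⟩ := WellFounded.has_min wellFounded_lt {i | W.phase i ≤ t} hall
  refine ⟨k.castSucc, fun i hi => ?_, fun i hi => ?_⟩
  · exact not_le.mp fun h => hmin i h (Fin.succ_le_castSucc_iff.mp hi)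
  · exact (W.strictAnti_phase.antitone (Fin.castSucc_le_castSucc_iff.mp hi)).trans hk

variable {S : Slicing C Set.univ}
  (hW : ∀ i, W.factor i ∈ S.P (W.phase i))
include hW

lemma obj_succ_mem {i : Fin W.n} (hi : IsZero (W.obj i.castSucc)) :
    W.obj i.succ ∈ S.P (W.phase i) :=
  have := W.isIso_toFactor hi
  S.mem_of_iso (asIso (W.toFactor i)).symm (hW i)

/-- The vanishing of `Xⱼ₊₁ ⟶ Aⱼ` makes `Aⱼ` a retract of `Xⱼ[1]`, whose factors have
phases `> φⱼ`. -/
lemma isZero_factor_of_toFactor_eq_zero {j : Fin W.n} (h : W.toFactor j = 0) :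
    IsZero (W.factor j) := by
  obtain ⟨g, hg⟩ := Triangle.yoneda_exact₂ _ (rot_of_distTriang _ (W.distinguished j))
    (𝟙 (W.factor j)) ((Category.comp_id _).trans h)
  have hg0 : g = 0 := eq_zero_of_shift_one g fun f =>
    W.hom_obj_eq_zero (fun i hi v => S.hom_orth (by
      linarith [W.strictAnti_phase (Fin.succ_le_castSucc_iff.mp hi)])
      (hW i) (S.shift_neg_one_mem (hW j)) v) f
  rw [IsZero.iff_id_eq_zero, hg, hg0]
  exact comp_zero

/-- The maps from `Xᵢ₊₁ ≅ Aᵢ` to the later stages are injective, since the later factors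
have smaller phases. -/
lemma isZero_obj_succ_of_hom_eq_zero {i : Fin W.n} (hi : IsZero (W.obj i.castSucc))
    (h : ∀ u : W.obj i.succ ⟶ X, u = 0) : IsZero (W.obj i.succ) := by
  suffices ∀ j : Fin (W.n + 1), i.succ ≤ j → ∀ u : W.obj i.succ ⟶ W.obj j, u = 0 from
    (IsZero.iff_id_eq_zero _).mpr (this _ le_rfl _)
  intro j
  induction j using Fin.reverseInduction with
  | last => exact fun _ u => (cancel_mono W.lastIso.hom).mp ((h _).trans zero_comp.symm)
  | cast j ih =>
    intro hj u
    obtain ⟨g, rfl⟩ := Triangle.coyoneda_exact₂ _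
      (inv_rot_of_distTriang _ (W.distinguished j)) u
      (ih (hj.trans Fin.castSucc_lt_succ.le) _)
    rw [S.hom_orth (by linarith [W.strictAnti_phase (Fin.succ_le_castSucc_iff.mp hj)])
      (W.obj_succ_mem hW hi) (S.shift_neg_one_mem (hW j)) g]
    exact zero_comp

lemma isZero_obj_of_lt_phase {φ : ℝ} (hX : X ∈ S.P φ) {j : Fin (W.n + 1)}
    (h : ∀ i, i.succ ≤ j → φ < W.phase i) : IsZero (W.obj j) := by
  induction j using Fin.induction with
  | zero => exact W.isZero_zero
  | succ i ih =>
    have hi := ih fun i' hi' => h i' (hi'.trans Fin.castSucc_lt_succ.le)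
    exact W.isZero_obj_succ_of_hom_eq_zero hW hi fun u =>
      S.hom_orth (h i le_rfl) (W.obj_succ_mem hW hi) hX u

lemma isZero_factor_of_obj_succ_mem {φ : ℝ} {i : Fin W.n} (hmem : W.obj i.succ ∈ S.P φ)
    (h : W.phase i < φ) : IsZero (W.factor i) :=
  W.isZero_factor_of_toFactor_eq_zero hW (S.hom_orth h hmem (hW i) _)

lemma nonempty_obj_iso_of_phase_lt {φ : ℝ} (hX : X ∈ S.P φ) {j : Fin (W.n + 1)}
    (h : ∀ i, j ≤ i.castSucc → W.phase i < φ) : Nonempty (W.obj j ≅ X) := by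
  induction j using Fin.reverseInduction with
  | last => exact ⟨W.lastIso⟩
  | cast j ih =>
    obtain ⟨e⟩ := ih fun i hi => h i (Fin.castSucc_lt_succ.le.trans hi)
    have := W.isIso_map (W.isZero_factor_of_obj_succ_mem hW (S.mem_of_iso e.symm hX)
      (h j le_rfl))
    exact ⟨asIso (W.map j) ≪≫ e⟩

lemma isZero_factor_of_phase_lt {φ : ℝ} (hX : X ∈ S.P φ) {i : Fin W.n}
    (h : W.phase i < φ) : IsZero (W.factor i) := by
  obtain ⟨e⟩ := W.nonempty_obj_iso_of_phase_lt hW hX (j := i.succ) fun i' hi' =>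
    (W.strictAnti_phase (Fin.succ_le_castSucc_iff.mp hi')).trans h
  exact W.isZero_factor_of_obj_succ_mem hW (S.mem_of_iso e.symm hX) h

lemma isZero_or_exists_factor_iso {φ : ℝ} (hX : X ∈ S.P φ) :
    IsZero X ∨ ∃ i, W.phase i = φ ∧ Nonempty (W.factor i ≅ X) := by
  by_cases hφ : ∃ i, W.phase i = φ
  · obtain ⟨i, rfl⟩ := hφ
    have hi : IsZero (W.obj i.castSucc) := W.isZero_obj_of_lt_phase hW hX fun i' hi' =>
      W.strictAnti_phase (Fin.succ_le_castSucc_iff.mp hi')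
    have := W.isIso_toFactor hi
    obtain ⟨e⟩ := W.nonempty_obj_iso_of_phase_lt hW hX (j := i.succ) fun i' hi' =>
      W.strictAnti_phase (Fin.succ_le_castSucc_iff.mp hi')
    exact Or.inr ⟨i, rfl, ⟨(asIso (W.toFactor i)).symm ≪≫ e⟩⟩
  · push Not at hφ
    obtain ⟨k, hhigh, hlow⟩ := W.exists_cut φ
    obtain ⟨e⟩ := W.nonempty_obj_iso_of_phase_lt hW hX fun i hi =>
      (hlow i hi).lt_of_ne (hφ i)
    exact Or.inl ((W.isZero_obj_of_lt_phase hW hX hhigh).of_iso e.symm)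

end PhaseFiltration

section CalculusOfFractions

open MorphismProperty

variable {C' : Type*} [Category C'] (W : MorphismProperty C')

def LeftOreCondition : Prop :=
  ∀ ⦃X' X Y : C'⦄ (s : X' ⟶ X), W s → ∀ f : X' ⟶ Y,
    ∃ (Y' : C') (f' : X ⟶ Y') (s' : Y ⟶ Y'), W s' ∧ f ≫ s' = s ≫ f'

def LeftCancellationCondition : Prop :=
  ∀ ⦃X' X Y : C'⦄ (f₁ f₂ : X ⟶ Y) (s : X' ⟶ X), W s → s ≫ f₁ = s ≫ f₂ →
    ∃ (Y' : C') (t : Y ⟶ Y'), W t ∧ f₁ ≫ t = f₂ ≫ t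

variable {W}

lemma LeftOreCondition.multiplicativeClosure (hore : LeftOreCondition W) :
    LeftOreCondition W.multiplicativeClosure := by
  intro X' X Y s hs f
  induction hs generalizing Y with
  | of s hs =>
    obtain ⟨Y', f', s', hs', e⟩ := hore s hs f
    exact ⟨Y', f', s', .of s' hs', e⟩
  | id X => exact ⟨_, f, 𝟙 _, .id _, by simp⟩
  | comp_of s₁ s₂ _ hs₂ ih =>
    obtain ⟨Y₁, f₁, t₁, ht₁, e₁⟩ := ih f
    obtain ⟨Y₂, f₂, t₂, ht₂, e₂⟩ := hore s₂ hs₂ f₁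
    refine ⟨Y₂, f₂, t₁ ≫ t₂, .comp_of _ _ ht₁ ht₂, ?_⟩
    rw [← Category.assoc, e₁, Category.assoc, e₂, Category.assoc]

lemma LeftCancellationCondition.multiplicativeClosure (hext : LeftCancellationCondition W) :
    LeftCancellationCondition W.multiplicativeClosure := by
  intro X' X Y f₁ f₂ s hs h
  induction hs generalizing Y with
  | of s hs =>
    obtain ⟨Y', t, ht, e⟩ := hext f₁ f₂ s hs h
    exact ⟨Y', t, .of t ht, e⟩
  | id X => exact ⟨_, 𝟙 _, .id _, by simpa using h⟩
  | comp_of s₁ s₂ _ hs₂ ih =>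
    obtain ⟨Y₁, t₁, ht₁, e₁⟩ := ih (s₂ ≫ f₁) (s₂ ≫ f₂) (by simpa using h)
    obtain ⟨Y₂, t₂, ht₂, e₂⟩ :=
      hext (f₁ ≫ t₁) (f₂ ≫ t₁) s₂ hs₂ (by simpa using e₁)
    exact ⟨Y₂, t₁ ≫ t₂, .comp_of _ _ ht₁ ht₂, by simpa using e₂⟩

lemma hasLeftCalculusOfFractions_multiplicativeClosure (hore : LeftOreCondition W)
    (hext : LeftCancellationCondition W) :
    W.multiplicativeClosure.HasLeftCalculusOfFractions where
  exists_leftFraction X Y φ := by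
    obtain ⟨Y', f', s', hs', e⟩ := hore.multiplicativeClosure φ.s φ.hs φ.f
    exact ⟨⟨f', s', hs'⟩, e⟩
  ext X' X Y f₁ f₂ s hs h := by
    obtain ⟨Y', t, ht, e⟩ := hext.multiplicativeClosure f₁ f₂ s hs h
    exact ⟨Y', t, ht, e⟩

variable (W) in
lemma isLocalization_multiplicativeClosure {D' : Type*} [Category D'] (L : C' ⥤ D')
    [L.IsLocalization W] : L.IsLocalization W.multiplicativeClosure :=
  Functor.IsLocalization.of_equivalence_source L W L W.multiplicativeClosure
    CategoryTheory.Equivalence.refl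
    (fun _ _ _ hf => le_isoClosure _ _ (le_multiplicativeClosure W _ hf))
    ((IsInvertedBy.iff_le_inverseImage_isomorphisms _ L).2
      ((multiplicativeClosure_le_iff _ _).2
        ((IsInvertedBy.iff_le_inverseImage_isomorphisms _ L).1 (Localization.inverts L W))))
    (Functor.leftUnitor L)

end CalculusOfFractions

section Verdier

open ZeroObject

variable {N : Set C}

def FactorsThrough (N : Set C) {X Y : C} (f : X ⟶ Y) : Prop :=
  ∃ M ∈ N, ∃ (b : X ⟶ M) (w : M ⟶ Y), b ≫ w = f

lemma FactorsThrough.zero (hN : IsThick C N) (X Y : C) : FactorsThrough N (0 : X ⟶ Y) :=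
  ⟨0, hN.zero_mem (isZero_zero C), 0, 0, zero_comp⟩

lemma FactorsThrough.add (hN : IsThick C N) {X Y : C} {f g : X ⟶ Y}
    (hf : FactorsThrough N f) (hg : FactorsThrough N g) : FactorsThrough N (f + g) := by
  obtain ⟨M₁, h₁, b₁, w₁, rfl⟩ := hf
  obtain ⟨M₂, h₂, b₂, w₂, rfl⟩ := hg
  exact ⟨M₁ ⊞ M₂, hN.ext_mem _ (binaryBiproductTriangle_distinguished M₁ M₂) h₁ h₂,
    biprod.lift b₁ b₂, biprod.desc w₁ w₂, by simp⟩

/-- With `Z ∈ N` the cone of `s` and `K ∈ N` the fibre of `M ⟶ V' ⟶ Z`, a factorization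
`g ≫ s = b ≫ w` through `M` yields a map through `K` whose difference with `g` factors
through `Z[-1]`. -/
lemma FactorsThrough.of_comp_verdierW (hN : IsThick C N) {A V V' : C} {s : V ⟶ V'}
    (hs : VerdierW C N s) {g : A ⟶ V} (h : FactorsThrough N (g ≫ s)) : FactorsThrough N g := by
  obtain ⟨Z, p, θ, hT, hZ⟩ := hs
  obtain ⟨M, hM, b, w, hbw⟩ := h
  obtain ⟨K, κ, ω, hT'⟩ := distinguished_cocone_triangle₁ (w ≫ p)
  have hsp : s ≫ p = 0 := comp_distTriang_mor_zero₁₂ _ hT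
  have hK : K ∈ N := hN.ext_mem _ (inv_rot_of_distTriang _ hT') (hN.shift_mem Z (-1) hZ) hM
  obtain ⟨b₁, rfl⟩ : ∃ b₁ : A ⟶ K, b = b₁ ≫ κ := Triangle.coyoneda_exact₂ _ hT' _ (by
    change b ≫ w ≫ p = 0
    rw [← Category.assoc, hbw, Category.assoc, hsp, comp_zero])
  obtain ⟨l, hl⟩ : ∃ l : K ⟶ V, κ ≫ w = l ≫ s := Triangle.coyoneda_exact₂ _ hT _ (by
    change (κ ≫ w) ≫ p = 0
    rw [Category.assoc]
    exact comp_distTriang_mor_zero₁₂ _ hT')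
  obtain ⟨c, w', hc⟩ : ∃ (c : A ⟶ Z⟦(-1 : ℤ)⟧) (w' : Z⟦(-1 : ℤ)⟧ ⟶ V),
      g - b₁ ≫ l = c ≫ w' := by
    obtain ⟨c, hc⟩ := Triangle.coyoneda_exact₂ _ (inv_rot_of_distTriang _ hT) _ (by
      change (g - b₁ ≫ l) ≫ s = 0
      rw [Preadditive.sub_comp, Category.assoc, ← hl, ← hbw, Category.assoc, sub_self])
    exact ⟨c, _, hc⟩
  rw [← sub_add_cancel g (b₁ ≫ l), hc]
  exact .add hN ⟨_, hN.shift_mem Z (-1) hZ, c, w', rfl⟩ ⟨K, hK, b₁, l, rfl⟩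

lemma FactorsThrough.of_comp_multiplicativeClosure (hN : IsThick C N) {V V' : C} {s : V ⟶ V'}
    (hs : (VerdierW C N).multiplicativeClosure s) {A : C} {g : A ⟶ V}
    (h : FactorsThrough N (g ≫ s)) : FactorsThrough N g := by
  induction hs generalizing A with
  | of s hs => exact .of_comp_verdierW hN hs h
  | id X => simpa using h
  | comp_of s₁ s₂ _ hs₂ ih => exact ih (.of_comp_verdierW hN hs₂ (by simpa using h))

lemma verdierW_leftOreCondition (hN : IsThick C N) : LeftOreCondition (VerdierW C N) := by
  intro X' X Y s hs f
  obtain ⟨Z, p, θ, hT, hZ⟩ := hs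
  obtain ⟨Y', s', k, hT₂⟩ :=
    distinguished_cocone_triangle ((Triangle.mk s p θ).invRotate.mor₁ ≫ f)
  obtain ⟨c, hc, -⟩ := complete_distinguished_triangle_morphism _ _
    (inv_rot_of_distTriang _ hT) hT₂ (𝟙 _) f (Category.id_comp _).symm
  exact ⟨Y', c, s', ⟨_, k, _, rot_of_distTriang _ hT₂,
    hN.shift_mem _ 1 (hN.shift_mem _ (-1) hZ)⟩, hc.symm⟩

lemma verdierW_leftCancellationCondition (hN : IsThick C N) :
    LeftCancellationCondition (VerdierW C N) := by
  intro X' X Y f₁ f₂ s hs h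
  obtain ⟨Z, p, θ, hT, hZ⟩ := hs
  obtain ⟨q, hq⟩ : ∃ q : Z ⟶ Y, f₁ - f₂ = p ≫ q := Triangle.yoneda_exact₂ _ hT _ (by
    change s ≫ (f₁ - f₂) = 0
    rw [Preadditive.comp_sub, h, sub_self])
  obtain ⟨Y', t, k, hT₂⟩ := distinguished_cocone_triangle q
  refine ⟨Y', t, ⟨_, k, _, rot_of_distTriang _ hT₂, hN.shift_mem Z 1 hZ⟩, ?_⟩
  have hqt : q ≫ t = 0 := comp_distTriang_mor_zero₁₂ _ hT₂
  rw [← sub_eq_zero, ← Preadditive.sub_comp, hq, Category.assoc, hqt, comp_zero]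

lemma factorsThrough_of_map_eq_zero (hN : IsThick C N) {D' : Type*} [Category D']
    [Preadditive D'] (L : C ⥤ D') [L.IsLocalization (VerdierW C N)] [L.PreservesZeroMorphisms]
    {A X : C} {f : A ⟶ X} (hf : L.map f = 0) : FactorsThrough N f := by
  have := hasLeftCalculusOfFractions_multiplicativeClosure
    (verdierW_leftOreCondition hN) (verdierW_leftCancellationCondition hN)
  have := isLocalization_multiplicativeClosure (VerdierW C N) L
  obtain ⟨Z, s, hs, e⟩ := (MorphismProperty.map_eq_iff_postcomp L
    (VerdierW C N).multiplicativeClosure f 0).mp (by rw [hf, L.map_zero])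
  rw [zero_comp] at e
  exact .of_comp_multiplicativeClosure hN hs (e ▸ .zero hN _ _)

end Verdier

lemma HNFiltration.mem_of_forall_phase_eq {S : Slicing C Set.univ} {X : C}
    (W : HNFiltration C S.P X) (hX : ¬ IsZero X) {φ : ℝ} (h : ∀ i, W.phase i = φ) :
    X ∈ S.P φ := by
  let V := W.toPhaseFiltration
  have hpos : 0 < W.n := by
    by_contra! h0
    have hlast : Fin.last W.n = 0 := Fin.ext (by simp; omega)
    exact hX (by rw [← W.last_eq, hlast]; exact W.isZero_zero)
  have hone : W.n ≤ 1 := Fin.subsingleton_iff_le_one.mp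
    ⟨fun i j => V.strictAnti_phase.injective ((h i).trans (h j).symm)⟩
  let i : Fin W.n := ⟨0, hpos⟩
  have h₀ : IsZero (V.obj i.castSucc) := by
    rw [show i.castSucc = 0 from Fin.ext rfl]
    exact V.isZero_zero
  have := V.isIso_toFactor h₀
  have hlast : i.succ = Fin.last W.n := Fin.ext (by simp [i]; omega)
  exact S.mem_of_iso
    ((asIso (V.toFactor i)).symm ≪≫ eqToIso (congrArg V.obj hlast) ≪≫ V.lastIso)
    (h i ▸ W.factor_mem i)

section Compatible

variable {N : Set C} {D : Type u₂} [Category.{v₂} D] [Preadditive D] [HasZeroObject D]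
  [HasShift D ℤ] [∀ n : ℤ, (shiftFunctor D n).Additive] [Pretriangulated D]
  {F : C ⥤ D} {S : Slicing C Set.univ} {SN : Slicing C N} {SQ : Slicing D Set.univ}

lemma Compatible.slice_eq_inter (hcomp : Compatible F S SN SQ) (φ : ℝ) :
    SN.P φ = S.P φ ∩ N := by
  refine Set.Subset.antisymm (fun X hX => ⟨hcomp.1 φ hX, SN.subset φ hX⟩) ?_
  rintro X ⟨hS, hXN⟩
  by_cases hz : IsZero X
  · exact SN.zero_mem φ hz hXN
  obtain ⟨W⟩ := SN.hn X hXN hz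
  obtain hz' | ⟨i, rfl, ⟨e⟩⟩ := W.toPhaseFiltration.isZero_or_exists_factor_iso
    (fun i => hcomp.1 _ (W.factor_mem i)) hS
  · exact absurd hz' hz
  · exact SN.isoClosed _ e hXN (W.factor_mem i)

lemma Compatible.slice_eq_quotSlices [F.CommShift ℤ] [F.IsTriangulated] [F.EssSurj]
    (hcomp : Compatible F S SN SQ) (φ : ℝ) : SQ.P φ = QuotSlices F S.P φ := by
  refine Set.Subset.antisymm (fun d hd => ?_)
    (fun d ⟨c, hc, ⟨e⟩⟩ => SQ.mem_of_iso e.symm (hcomp.2 φ c hc))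
  let e := F.objObjPreimageIso d
  by_cases hz : IsZero (F.objPreimage d)
  · exact ⟨_, S.zero_mem φ hz (Set.mem_univ _), ⟨e.symm⟩⟩
  obtain ⟨W⟩ := S.hn _ (Set.mem_univ _) hz
  obtain hz' | ⟨i, rfl, ⟨e'⟩⟩ :=
    (W.toPhaseFiltration.mapTriangulated F).isZero_or_exists_factor_iso
      (fun i => hcomp.2 _ _ (W.factor_mem i)) (SQ.mem_of_iso e.symm hd)
  · exact ⟨_, S.zero_mem φ (isZero_zero C) (Set.mem_univ _),
      ⟨(hz'.of_iso e.symm).iso (F.map_isZero (isZero_zero C))⟩⟩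
  · exact ⟨W.factor i, W.factor_mem i, ⟨e.symm ≪≫ e'.symm⟩⟩

lemma eq_zero_of_factorsThrough_of_lt_phase (hSN : ∀ ψ, SN.P ψ ⊆ S.P ψ) {φ α : ℝ}
    {A X : C} (hA : A ∈ S.P α) (hα : φ < α)
    (hX : ∀ ψ, φ < ψ → ∀ b ∈ SN.P ψ, ∀ f : b ⟶ X, f = 0)
    {f : A ⟶ X} (hf : FactorsThrough N f) : f = 0 := by
  obtain ⟨M, hM, b, w, rfl⟩ := hf
  by_cases hzM : IsZero M
  · rw [hzM.eq_of_tgt b 0, zero_comp]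
  obtain ⟨W⟩ := SN.hn M hM hzM
  exact W.toPhaseFiltration.comp_eq_zero_of_phase_split α
    (fun i hi => hX _ (hα.trans_le hi) _ (W.factor_mem i))
    (fun i hi => S.hom_orth hi hA (hSN _ (W.factor_mem i))) b w

lemma eq_zero_of_factorsThrough_of_phase_lt (hSN : ∀ ψ, SN.P ψ ⊆ S.P ψ) {φ α : ℝ}
    {A X : C} (hA : A ∈ S.P α) (hα : α < φ)
    (hX : ∀ ψ, ψ < φ → ∀ d ∈ SN.P ψ, ∀ f : X ⟶ d, f = 0)
    {f : X ⟶ A} (hf : FactorsThrough N f) : f = 0 := by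
  obtain ⟨M, hM, b, w, rfl⟩ := hf
  by_cases hzM : IsZero M
  · rw [hzM.eq_of_tgt b 0, zero_comp]
  obtain ⟨W⟩ := SN.hn M hM hzM
  exact W.toPhaseFiltration.comp_eq_zero_of_phase_split φ
    (fun i hi => S.hom_orth (hα.trans_le hi) (hSN _ (W.factor_mem i)) hA)
    (fun i hi => hX _ hi _ (W.factor_mem i)) b w

variable [F.CommShift ℤ] [F.IsTriangulated] [F.IsLocalization (VerdierW C N)]

lemma Compatible.phase_le (hN : IsThick C N) (hcomp : Compatible F S SN SQ) {φ : ℝ} {X : C}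
    (hQ : F.obj X ∈ SQ.P φ) (hX : ∀ ψ, φ < ψ → ∀ b ∈ SN.P ψ, ∀ f : b ⟶ X, f = 0)
    (W : HNFiltration C S.P X) (i : Fin W.n) : W.phase i ≤ φ := by
  by_contra! hi
  let V := W.toPhaseFiltration
  let i₀ : Fin W.n := ⟨0, i.pos⟩
  have hfirst : ∀ j, j.succ ≤ i₀.succ → φ < W.phase j := fun j hj =>
    hi.trans_le (V.strictAnti_phase.antitone (by
      rw [Fin.succ_le_succ_iff, Fin.le_def] at hj
      exact Fin.le_def.mpr (by simp [i₀] at hj; omega)))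
  have h₀ : IsZero (V.obj i₀.castSucc) := by
    rw [show i₀.castSucc = 0 from Fin.ext rfl]
    exact V.isZero_zero
  have hF : IsZero ((V.mapTriangulated F).obj i₀.succ) :=
    (V.mapTriangulated F).isZero_obj_of_lt_phase (fun j => hcomp.2 _ _ (W.factor_mem j)) hQ hfirst
  have hV : IsZero (V.obj i₀.succ) := V.isZero_obj_succ_of_hom_eq_zero W.factor_mem h₀ fun u =>
    eq_zero_of_factorsThrough_of_lt_phase hcomp.1 (V.obj_succ_mem W.factor_mem h₀)
      (hfirst i₀ le_rfl) hX (factorsThrough_of_map_eq_zero hN F (hF.eq_of_src _ _))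
  have := V.isIso_toFactor h₀
  exact W.factor_nonzero i₀ (hV.of_iso (asIso (V.toFactor i₀)).symm)

lemma Compatible.le_phase (hN : IsThick C N) (hcomp : Compatible F S SN SQ) {φ : ℝ} {X : C}
    (hQ : F.obj X ∈ SQ.P φ) (hX : ∀ ψ, ψ < φ → ∀ d ∈ SN.P ψ, ∀ f : X ⟶ d, f = 0)
    (W : HNFiltration C S.P X) (i : Fin W.n) : φ ≤ W.phase i := by
  by_contra! hi
  let V := W.toPhaseFiltration
  have hVn : V.n = W.n := rfl
  have := i.isLt
  let iₗ : Fin W.n := ⟨W.n - 1, by omega⟩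
  have hlt : W.phase iₗ < φ :=
    (V.strictAnti_phase.antitone (Fin.le_def.mpr (by simp [iₗ]; omega))).trans_lt hi
  have hF : IsZero (F.obj (W.factor iₗ)) := (V.mapTriangulated F).isZero_factor_of_phase_lt
    (fun j => hcomp.2 _ _ (W.factor_mem j)) hQ hlt
  let e : V.obj iₗ.succ ≅ X :=
    eqToIso (congrArg V.obj (Fin.ext (by simp [iₗ]; omega) : iₗ.succ = Fin.last W.n)) ≪≫
      V.lastIso
  have hu : e.inv ≫ V.toFactor iₗ = 0 :=
    eq_zero_of_factorsThrough_of_phase_lt hcomp.1 (W.factor_mem iₗ) hlt hX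
      (factorsThrough_of_map_eq_zero hN F (hF.eq_of_tgt _ _))
  have hto : V.toFactor iₗ = 0 := (cancel_epi e.inv).mp (hu.trans comp_zero.symm)
  exact W.factor_nonzero iₗ (V.isZero_factor_of_toFactor_eq_zero W.factor_mem hto)

lemma Compatible.mem_slice_iff (hN : IsThick C N) (hcomp : Compatible F S SN SQ) (φ : ℝ)
    (X : C) : X ∈ S.P φ ↔
      (F.obj X ∈ SQ.P φ ∧
        (∀ ψ : ℝ, φ < ψ → ∀ b ∈ SN.P ψ, ∀ f : b ⟶ X, f = 0) ∧
        (∀ ψ : ℝ, ψ < φ → ∀ d ∈ SN.P ψ, ∀ f : X ⟶ d, f = 0)) := by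
  refine ⟨fun h => ⟨hcomp.2 φ X h, fun ψ hψ b hb f => S.hom_orth hψ (hcomp.1 ψ hb) h f,
    fun ψ hψ d hd f => S.hom_orth hψ h (hcomp.1 ψ hd) f⟩, fun ⟨hQ, hhigh, hlow⟩ => ?_⟩
  by_cases hz : IsZero X
  · exact S.zero_mem φ hz (Set.mem_univ X)
  obtain ⟨W⟩ := S.hn X (Set.mem_univ X) hz
  exact W.mem_of_forall_phase_eq hz fun i =>
    le_antisymm (hcomp.phase_le hN hQ hhigh W i) (hcomp.le_phase hN hQ hlow W i)

end Compatible

/-- uniqueness and characterisation of compatible pairs of slicings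
on a thick subcategory and on the Verdier quotient. -/
theorem statement_0 (N : Set C) (hN : IsThick C N)
    (D : Type u₂) [Category.{v₂} D] [Preadditive D] [HasZeroObject D]
    [HasShift D ℤ] [∀ n : ℤ, (shiftFunctor D n).Additive] [Pretriangulated D]
    (F : C ⥤ D) [F.CommShift ℤ] [F.IsTriangulated] [F.IsLocalization (VerdierW C N)]
    (S : Slicing C Set.univ) (SN : Slicing C N) (SQ : Slicing D Set.univ)
    (hcomp : Compatible F S SN SQ) :
    (∀ φ : ℝ, SN.P φ = S.P φ ∩ N) ∧
    (∀ φ : ℝ, SQ.P φ = QuotSlices F S.P φ) ∧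
    (∀ (SN' : Slicing C N) (SQ' : Slicing D Set.univ), Compatible F S SN' SQ' →
      (∀ φ : ℝ, SN'.P φ = SN.P φ) ∧ (∀ φ : ℝ, SQ'.P φ = SQ.P φ)) ∧
    (∀ S' : Slicing C Set.univ, Compatible F S' SN SQ → ∀ φ : ℝ, S'.P φ = S.P φ) ∧
    (∀ (φ : ℝ) (X : C), X ∈ S.P φ ↔
      (F.obj X ∈ SQ.P φ ∧
        (∀ ψ : ℝ, φ < ψ → ∀ b ∈ SN.P ψ, ∀ f : b ⟶ X, f = 0) ∧
        (∀ ψ : ℝ, ψ < φ → ∀ d ∈ SN.P ψ, ∀ f : X ⟶ d, f = 0))) := by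
  have := Localization.essSurj F (VerdierW C N)
  refine ⟨hcomp.slice_eq_inter, hcomp.slice_eq_quotSlices, fun SN' SQ' hcomp' =>
    ⟨fun φ => ?_, fun φ => ?_⟩, fun S' hcomp' φ => ?_, hcomp.mem_slice_iff hN⟩
  · rw [hcomp'.slice_eq_inter, hcomp.slice_eq_inter]
  · rw [hcomp'.slice_eq_quotSlices, hcomp.slice_eq_quotSlices]
  · ext X
    rw [hcomp'.mem_slice_iff hN, hcomp.mem_slice_iff hN]

end PaperStab
end

section
/- For a lax pre-stability condition σ = (P, Z) on C with charge factoring through v : K(C) → Λ, the following are equivalent: (1) σ is a lax stability condition, i.e. there is K > 0 with |Z(v(s))| ≥ ||v(s)||/K for every massive stable object s; (2) σ is full, i.e. there is K > 0 with ||W||_σ ≤ K·||W|| for every W ∈ Hom(Λ, ℂ), where ||W|| denotes the operator norm; (3) there exists a quadratic form Δ on Λ ⊗ ℝ such that Δ(v(s)) ≥ 0 for every massive stable object s and Δ is negative definite on ker Z ⊆ Λ ⊗ ℝ. -/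
open CategoryTheory CategoryTheory.Limits CategoryTheory.Pretriangulated
open scoped ENNReal

namespace PaperStab

attribute [local instance] Classical.propDecidable

universe w w₂ u v u₂ v₂

variable (C : Type u) [Category.{v} C] [Preadditive C] [HasZeroObject C]
  [HasShift C ℤ] [∀ n : ℤ, (shiftFunctor C n).Additive] [Pretriangulated C]

variable {C}

variable (C)
variable (E : Type w) [NormedAddCommGroup E] [InnerProductSpace ℝ E] [FiniteDimensional ℝ E]

variable {C E}

/-!
A massive stable object `s` sits where the quadratic form `K² |Z|² - ‖·‖²` is non-negative,
and this form is negative definite on `ker Z`; conversely such a form cuts out a closed cone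
meeting `ker Z` only at `0`, so by compactness of the unit sphere `|Z|` is bounded below by a
multiple of `‖·‖` on that cone. Fullness is the support property tested against all
functionals `W`: `|W(s)| ≤ ‖W‖ ‖s‖`, with equality for a Hahn–Banach functional at `s`.
-/

section NormedSpace

variable {V : Type*} [NormedAddCommGroup V] [NormedSpace ℝ V]
  {F : Type*} [NormedAddCommGroup F] [NormedSpace ℝ F]

theorem _root_.QuadraticMap.continuous_of_finiteDimensional [FiniteDimensional ℝ V]
    (Q : QuadraticForm ℝ V) : Continuous Q := by
  have hB := (QuadraticMap.associated (R := ℝ) Q).toContinuousBilinearMap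
    |>.isBoundedBilinearMap.continuous
  refine (hB.comp (continuous_id.prodMk continuous_id)).congr fun x => ?_
  exact QuadraticMap.associated_eq_self_apply ℝ Q x

theorem forall_norm_apply_div_le_iff {Z : V →L[ℝ] F} {x : V} (hx : Z x ≠ 0) {K : ℝ}
    (hK : 0 ≤ K) :
    (∀ W : V →L[ℝ] ℂ, ‖W x‖ / ‖Z x‖ ≤ K * ‖W‖) ↔ ‖x‖ ≤ K * ‖Z x‖ := by
  have hZx : 0 < ‖Z x‖ := norm_pos_iff.2 hx
  constructor
  · intro h
    obtain ⟨g, hg, hgx⟩ := exists_dual_vector'' ℝ x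
    have hW : ‖Complex.ofRealCLM.comp g‖ ≤ 1 :=
      (ContinuousLinearMap.opNorm_comp_le _ _).trans (by simpa [Complex.ofRealCLM_norm] using hg)
    have hWx : ‖Complex.ofRealCLM.comp g x‖ = ‖x‖ := by simp [hgx]
    have hbound := h (Complex.ofRealCLM.comp g)
    rw [div_le_iff₀ hZx, hWx] at hbound
    calc ‖x‖ ≤ K * ‖Complex.ofRealCLM.comp g‖ * ‖Z x‖ := hbound
      _ ≤ K * 1 * ‖Z x‖ := by gcongr
      _ = K * ‖Z x‖ := by ring
  · intro h W
    rw [div_le_iff₀ hZx]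
    calc ‖W x‖ ≤ ‖W‖ * ‖x‖ := W.le_opNorm x
      _ ≤ ‖W‖ * (K * ‖Z x‖) := by gcongr
      _ = K * ‖W‖ * ‖Z x‖ := by ring

theorem exists_norm_le_mul_norm_of_quadraticForm_nonneg [FiniteDimensional ℝ V]
    (Z : V →L[ℝ] F) (Δ : QuadraticForm ℝ V) (hΔ : ∀ x, Z x = 0 → x ≠ 0 → Δ x < 0) :
    ∃ K > 0, ∀ x, 0 ≤ Δ x → ‖x‖ ≤ K * ‖Z x‖ := by
  set A := Metric.sphere (0 : V) 1 ∩ {x | 0 ≤ Δ x}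
  have hA : IsCompact A := (isCompact_sphere 0 1).inter_right
    (isClosed_le continuous_const Δ.continuous_of_finiteDimensional)
  have hZA : ∀ a ∈ A, 0 < ‖Z a‖ := fun a ⟨ha1, ha⟩ => norm_pos_iff.2 fun h0 =>
    (hΔ a h0 (ne_zero_of_mem_unit_sphere ⟨a, ha1⟩)).not_ge ha
  obtain ⟨c, hc, hcA⟩ := hA.exists_forall_le' Z.continuous.norm.continuousOn hZA
  refine ⟨c⁻¹, inv_pos.2 hc, fun x hx => ?_⟩
  rcases eq_or_ne x 0 with rfl | hx0
  · simp
  have hxpos : 0 < ‖x‖ := norm_pos_iff.2 hx0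
  have hxA : ‖x‖⁻¹ • x ∈ A := ⟨by simp [norm_smul, hxpos.ne'],
    by rw [Set.mem_ofPred_eq, QuadraticMap.map_smul]; positivity⟩
  have hcx := hcA _ hxA
  rw [map_smul, norm_smul, norm_inv, norm_norm, le_inv_mul_iff₀ hxpos] at hcx
  rw [le_inv_mul_iff₀ hc]
  linarith

end NormedSpace

section InnerProductSpace

variable {V : Type*} [NormedAddCommGroup V] [InnerProductSpace ℝ V]
  {F : Type*} [NormedAddCommGroup F] [InnerProductSpace ℝ F]

noncomputable def normSqForm (T : V →ₗ[ℝ] F) : QuadraticForm ℝ V :=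
  LinearMap.BilinMap.toQuadraticMap ((innerₗ F).compl₁₂ T T)

theorem normSqForm_apply (T : V →ₗ[ℝ] F) (x : V) : normSqForm T x = ‖T x‖ ^ 2 := by
  simp [normSqForm]

theorem exists_quadraticForm_nonneg_iff_norm_le (Z : V →L[ℝ] F) {K : ℝ} (hK : 0 ≤ K) :
    ∃ Δ : QuadraticForm ℝ V, ∀ x, 0 ≤ Δ x ↔ ‖x‖ ≤ K * ‖Z x‖ := by
  refine ⟨K ^ 2 • normSqForm (Z : V →ₗ[ℝ] F) - normSqForm LinearMap.id, fun x => ?_⟩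
  simp only [sub_apply, smul_apply, normSqForm_apply, smul_eq_mul,
    ContinuousLinearMap.coe_coe, LinearMap.id_apply, sub_nonneg, ← mul_pow]
  exact pow_le_pow_iff_left₀ (by positivity) (by positivity) two_ne_zero

end InnerProductSpace

namespace LaxPreStab

variable {N : Set C} {vd : ChargeData C E} (σ : LaxPreStab C E N vd)

omit [FiniteDimensional ℝ E] in
theorem hasSupport_iff :
    σ.HasSupport ↔ ∃ K > (0 : ℝ), ∀ X : C, σ.MassiveStable X → ‖vd.v X‖ ≤ K * ‖σ.Z (vd.v X)‖ :=
  exists_congr fun K => and_congr_right fun hK => forall₂_congr fun X _ => by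
    rw [div_le_iff₀ hK, mul_comm]

omit [FiniteDimensional ℝ E] in
theorem seminorm_le_ofReal_iff (W : E →L[ℝ] ℂ) {c : ℝ} (hc : 0 ≤ c) :
    σ.seminorm W ≤ ENNReal.ofReal c ↔
      ∀ X : C, σ.MassiveStable X → ‖W (vd.v X)‖ / ‖σ.Z (vd.v X)‖ ≤ c := by
  simp only [seminorm, iSup_le_iff, ENNReal.ofReal_le_ofReal_iff hc]

end LaxPreStab

/-- equivalent formulations of the support property for a lax pre-stability
condition: support, fullness, and existence of a suitable quadratic form. -/
theorem statement_5 (vd : ChargeData C E) (σ : LaxPreStab C E Set.univ vd) :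
    (σ.HasSupport ↔
      ∃ K > (0 : ℝ), ∀ W : E →L[ℝ] ℂ, σ.seminorm W ≤ ENNReal.ofReal (K * ‖W‖)) ∧
    (σ.HasSupport ↔
      ∃ Δ : QuadraticForm ℝ E,
        (∀ X : C, σ.MassiveStable X → 0 ≤ Δ (vd.v X)) ∧
        (∀ x : E, σ.Z x = 0 → x ≠ 0 → Δ x < 0)) := by
  refine ⟨?_, ⟨fun hσ => ?_, fun ⟨Δ, hΔ, hker⟩ => ?_⟩⟩
  · rw [σ.hasSupport_iff]
    refine exists_congr fun K => and_congr_right fun hK => ?_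
    simp only [σ.seminorm_le_ofReal_iff _ (mul_nonneg hK.le (norm_nonneg _))]
    exact ⟨fun h W X hX => (forall_norm_apply_div_le_iff hX.2 hK.le).2 (h X hX) W,
      fun h X hX => (forall_norm_apply_div_le_iff hX.2 hK.le).1 fun W => h W X hX⟩
  · obtain ⟨K, hK, hsupp⟩ := σ.hasSupport_iff.1 hσ
    obtain ⟨Δ, hΔ⟩ := exists_quadraticForm_nonneg_iff_norm_le σ.Z hK.le
    refine ⟨Δ, fun X hX => (hΔ _).2 (hsupp X hX), fun x hx hx0 => ?_⟩
    rw [← not_le, hΔ, hx, norm_zero, mul_zero, not_le]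
    exact norm_pos_iff.2 hx0
  · obtain ⟨K, hK, hcone⟩ := exists_norm_le_mul_norm_of_quadraticForm_nonneg σ.Z Δ hker
    exact σ.hasSupport_iff.2 ⟨K, hK, fun X hX => hcone _ (hΔ X hX)⟩

end PaperStab
end
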